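/- Let G = PΓL_2(F_q) with q = p^f (p prime), acting 3-transitively on the projective line Ω = P^1(F_q). The pointwise stabilizer in G of the three points ⟨e_1⟩, ⟨e_2⟩, ⟨e_1+e_2⟩ is the group of field automorphisms, which is cyclic of order f. Consequently Irred(G,Ω) ≤ 3 + π(f), where π(f) is the number of prime divisors of f counted with multiplicity. -/

import Mathlib

open Projectivization

/-- The projective line over `F`, as the projectivization of `F²`. -/
abbrev ProjLine (F : Type*) [Field F] := Projectivization F (Fin 2 → F)

/-- The subgroup `PΓL₂(F)` of the symmetric group on the projective line: the group of
all permutations induced by invertible semilinear transformations of `F²`. -/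
noncomputable def PGammaL2 (F : Type*) [Field F] : Subgroup (Equiv.Perm (ProjLine F)) :=
  Subgroup.closure {π | ∃ (τ : F ≃+* F) (g : (Fin 2 → F) ≃+ (Fin 2 → F)),
    (∀ (a : F) (v : Fin 2 → F), g (a • v) = τ a • g v) ∧
    ∀ (v : Fin 2 → F) (hv : v ≠ 0),
      π (Projectivization.mk F v hv) =
        Projectivization.mk F (g v) ((map_ne_zero_iff g g.injective).mpr hv)}

noncomputable def pt1 (F : Type*) [Field F] : ProjLine F :=
  Projectivization.mk F (Pi.single 0 1)
    (fun h => (one_ne_zero : (1:F) ≠ 0) (by simpa using congrFun h 0))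

noncomputable def pt2 (F : Type*) [Field F] : ProjLine F :=
  Projectivization.mk F (Pi.single 1 1)
    (fun h => (one_ne_zero : (1:F) ≠ 0) (by simpa using congrFun h 1))

noncomputable def pt3 (F : Type*) [Field F] : ProjLine F :=
  Projectivization.mk F (Pi.single 0 1 + Pi.single 1 1)
    (fun h => (one_ne_zero : (1:F) ≠ 0) (by simpa using congrFun h 0))

def listStab (G : Type*) {Ω : Type*} [Group G] [MulAction G Ω] (l : List Ω) : Subgroup G :=
  ⨅ ω ∈ l, MulAction.stabilizer G ω

def IsIrredundant (G : Type*) {Ω : Type*} [Group G] [MulAction G Ω] (l : List Ω) : Prop :=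
  ∀ k < l.length, listStab G (l.take (k + 1)) < listStab G (l.take k)

noncomputable def irredStat (G Ω : Type*) [Group G] [MulAction G Ω] : ℕ∞ :=
  sSup {n : ℕ∞ | ∃ l : List Ω, IsIrredundant G l ∧ (l.length : ℕ∞) = n}

/-! Every element of `PΓL₂(F)` is induced by a semilinear automorphism `g` of `F²`. If it fixes
`⟨e₁⟩`, `⟨e₂⟩` and `⟨e₁ + e₂⟩`, then `g` scales `e₁`, `e₂` and `e₁ + e₂` by one common factor, so
it acts as a field automorphism up to a scalar: this stabilizer is `Aut(F)`, which for
`F = 𝔽_{p^f}` is the Galois group over `𝔽_p`, cyclic of order `f`. Since `PGL₂(F)` is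
transitive on triples of distinct points, the pointwise stabilizer of any such triple is
conjugate to it. In an irredundant sequence the first three points are distinct, and every
further point passes to a proper subgroup, whose order loses at least one prime factor of `f`. -/

open ArithmeticFunction

section ListStab
variable {G Ω : Type*} [Group G] [MulAction G Ω]

lemma mem_listStab {l : List Ω} {g : G} : g ∈ listStab G l ↔ ∀ ω ∈ l, g • ω = ω := by
  simp [listStab, Subgroup.mem_iInf, MulAction.mem_stabilizer_iff]

lemma listStab_append_singleton (l : List Ω) (ω : Ω) :
    listStab G (l ++ [ω]) = listStab G l ⊓ MulAction.stabilizer G ω := by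
  ext g
  simp [mem_listStab, or_imp, forall_and]

lemma listStab_map_smul (g : G) (l : List Ω) :
    listStab G (l.map (g • ·)) = (listStab G l).map (MulAut.conj g).toMonoidHom := by
  ext h
  rw [Subgroup.mem_map_equiv]
  simp [mem_listStab, mul_smul, inv_smul_eq_iff]

lemma IsIrredundant.getElem_notMem_take {l : List Ω} (hl : IsIrredundant G l) {k : ℕ}
    (hk : k < l.length) : l[k] ∉ l.take k := fun hmem => by
  have hlt := hl k hk
  rw [List.take_add_one, List.getElem?_eq_getElem hk, Option.toList_some,
    listStab_append_singleton, inf_eq_left.mpr] at hlt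
  · exact lt_irrefl _ hlt
  · exact fun g hg => (mem_listStab.mp hg) _ hmem

lemma cardFactors_card_lt_of_lt [Finite G] {H K : Subgroup G} (h : H < K) :
    cardFactors (Nat.card H) < cardFactors (Nat.card K) := by
  obtain ⟨c, hc⟩ := Subgroup.card_dvd_of_le h.le
  have hc0 : c ≠ 0 := by rintro rfl; simp [Nat.card_pos.ne'] at hc
  have hc1 : c ≠ 1 := by
    rintro rfl
    exact h.ne (Subgroup.eq_of_le_of_card_ge h.le (by rw [hc, mul_one]))
  rw [hc, cardFactors_mul Nat.card_pos.ne' hc0, lt_add_iff_pos_right, cardFactors_pos_iff_one_lt]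
  omega

lemma IsIrredundant.length_le [Finite G] {l : List Ω} (hl : IsIrredundant G l) (k : ℕ) :
    l.length ≤ k + cardFactors (Nat.card (listStab G (l.take k))) := by
  induction h : l.length - k generalizing k with
  | zero => omega
  | succ n ih =>
    have hk : k < l.length := by omega
    have hrest := ih (k + 1) (by omega)
    have hstep := cardFactors_card_lt_of_lt (hl k hk)
    omega

end ListStab

section Semilinear
variable {F : Type*} [Field F]

def IsSemilinearlyInduced (π : Equiv.Perm (ProjLine F)) (τ : F ≃+* F) : Prop :=
  ∃ g : (Fin 2 → F) ≃+ (Fin 2 → F), (∀ (a : F) (v : Fin 2 → F), g (a • v) = τ a • g v) ∧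
    ∀ (v : Fin 2 → F) (hv : v ≠ 0),
      π (mk F v hv) = mk F (g v) ((map_ne_zero_iff g g.injective).mpr hv)

lemma isSemilinearlyInduced_one : IsSemilinearlyInduced (1 : Equiv.Perm (ProjLine F)) 1 :=
  ⟨AddEquiv.refl _, fun _ _ => rfl, fun _ _ => rfl⟩

lemma IsSemilinearlyInduced.mul {π₁ π₂ : Equiv.Perm (ProjLine F)} {τ₁ τ₂ : F ≃+* F}
    (h₁ : IsSemilinearlyInduced π₁ τ₁) (h₂ : IsSemilinearlyInduced π₂ τ₂) :
    IsSemilinearlyInduced (π₁ * π₂) (τ₁ * τ₂) := by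
  obtain ⟨g₁, hg₁, hπ₁⟩ := h₁
  obtain ⟨g₂, hg₂, hπ₂⟩ := h₂
  refine ⟨g₂.trans g₁, fun a v => ?_, fun v hv => ?_⟩
  · simp only [AddEquiv.trans_apply, hg₂, hg₁]
    rfl
  · rw [Equiv.Perm.mul_apply, hπ₂, hπ₁]
    rfl

lemma IsSemilinearlyInduced.inv {π : Equiv.Perm (ProjLine F)} {τ : F ≃+* F}
    (h : IsSemilinearlyInduced π τ) : IsSemilinearlyInduced π⁻¹ τ⁻¹ := by
  obtain ⟨g, hg, hπ⟩ := h
  refine ⟨g.symm, fun a v => g.injective ?_, fun v hv => π.injective ?_⟩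
  · rw [g.apply_symm_apply, hg, g.apply_symm_apply]
    exact congrArg (· • v) (τ.apply_symm_apply a).symm
  · rw [Equiv.Perm.inv_def, Equiv.apply_symm_apply, hπ]
    congr 1
    exact (g.apply_symm_apply v).symm

lemma exists_isSemilinearlyInduced_of_mem {π : Equiv.Perm (ProjLine F)} (h : π ∈ PGammaL2 F) :
    ∃ τ, IsSemilinearlyInduced π τ :=
  Subgroup.closure_induction (fun _ hπ => hπ) ⟨1, isSemilinearlyInduced_one⟩
    (fun _ _ _ _ ⟨τ₁, h₁⟩ ⟨τ₂, h₂⟩ => ⟨τ₁ * τ₂, h₁.mul h₂⟩)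
    (fun _ _ ⟨τ, hτ⟩ => ⟨τ⁻¹, hτ.inv⟩) h

noncomputable def semilinearPerm (τ : F ≃+* F) (g : (Fin 2 → F) ≃+ (Fin 2 → F))
    (hg : ∀ (a : F) (v : Fin 2 → F), g (a • v) = τ a • g v) : Equiv.Perm (ProjLine F) where
  toFun := map (σ := (τ : F →+* F)) ⟨g.toAddMonoidHom, hg⟩ g.injective
  invFun := map (σ := (τ.symm : F →+* F)) ⟨g.symm.toAddMonoidHom, fun a v => g.injective <| by
      simp [hg]⟩ g.symm.injective
  left_inv x := by
    induction x using Projectivization.ind with | h v hv =>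
    show mk F (g.symm (g v)) _ = _
    congr 1
    exact g.symm_apply_apply v
  right_inv x := by
    induction x using Projectivization.ind with | h v hv =>
    show mk F (g (g.symm v)) _ = _
    congr 1
    exact g.apply_symm_apply v

lemma semilinearPerm_mk (τ : F ≃+* F) (g : (Fin 2 → F) ≃+ (Fin 2 → F))
    (hg : ∀ (a : F) (v : Fin 2 → F), g (a • v) = τ a • g v) (v : Fin 2 → F) (hv : v ≠ 0) :
    semilinearPerm τ g hg (mk F v hv) = mk F (g v) ((map_ne_zero_iff g g.injective).mpr hv) :=
  rfl

lemma semilinearPerm_mem (τ : F ≃+* F) (g : (Fin 2 → F) ≃+ (Fin 2 → F))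
    (hg : ∀ (a : F) (v : Fin 2 → F), g (a • v) = τ a • g v) :
    semilinearPerm τ g hg ∈ PGammaL2 F :=
  Subgroup.subset_closure ⟨τ, g, hg, fun _ _ => rfl⟩

noncomputable def autPerm : RingAut F →* Equiv.Perm (ProjLine F) where
  toFun τ := semilinearPerm τ (AddEquiv.piCongrRight fun _ => τ.toAddEquiv) fun a v => by
    ext; simp
  map_one' := Equiv.ext fun x => by
    induction x using Projectivization.ind with | h v hv => rfl
  map_mul' σ τ := Equiv.ext fun x => by
    induction x using Projectivization.ind with | h v hv => rfl

lemma autPerm_mk (τ : RingAut F) (v : Fin 2 → F) (hv : v ≠ 0) :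
    autPerm τ (mk F v hv) =
      mk F (⇑τ ∘ v) (fun h0 => hv (funext fun i =>
        (map_eq_zero_iff τ τ.injective).mp (congrFun h0 i))) :=
  rfl

lemma autPerm_mem (τ : RingAut F) : autPerm τ ∈ PGammaL2 F :=
  semilinearPerm_mem _ _ _

lemma autPerm_injective : Function.Injective (autPerm (F := F)) := by
  intro σ τ h
  ext r
  have hv : ![1, r] ≠ 0 := fun h0 => one_ne_zero (congrFun h0 0)
  have := congrArg (· (mk F ![1, r] hv)) h
  simp only [autPerm_mk, mk_eq_mk_iff] at this
  obtain ⟨a, ha⟩ := this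
  have h0 := congrFun ha 0
  have h1 := congrFun ha 1
  simp [Units.smul_def] at h0 h1
  simpa [h0] using h1.symm

end Semilinear

section StandardFrame
variable {F : Type*} [Field F]

lemma semilinear_apply_eq_smul_comp {τ : F ≃+* F} {g : (Fin 2 → F) ≃+ (Fin 2 → F)}
    (hg : ∀ (a : F) (v : Fin 2 → F), g (a • v) = τ a • g v) {c : F}
    (h₀ : g (Pi.single 0 1) = c • Pi.single 0 1) (h₁ : g (Pi.single 1 1) = c • Pi.single 1 1)
    (v : Fin 2 → F) : g v = c • (⇑τ ∘ v) := by
  have hv : v = v 0 • Pi.single 0 1 + v 1 • Pi.single 1 1 := by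
    ext i; fin_cases i <;> simp
  conv_lhs => rw [hv, map_add, hg, hg, h₀, h₁]
  ext i; fin_cases i <;> simp [mul_comm]

lemma mem_listStab_pt_iff (π : PGammaL2 F) :
    π ∈ listStab (PGammaL2 F) [pt1 F, pt2 F, pt3 F] ↔
      ∃ τ, (π : Equiv.Perm (ProjLine F)) = autPerm τ := by
  constructor
  · intro hπ
    obtain ⟨τ, g, hg, hπg⟩ := exists_isSemilinearlyInduced_of_mem π.2
    have fixes : ∀ ω ∈ [pt1 F, pt2 F, pt3 F], (π : Equiv.Perm (ProjLine F)) ω = ω :=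
      mem_listStab.mp hπ
    obtain ⟨a, ha⟩ := (mk_eq_mk_iff F _ _ _ _).mp ((hπg _ _).symm.trans (fixes (pt1 F) (by simp)))
    obtain ⟨b, hb⟩ := (mk_eq_mk_iff F _ _ _ _).mp ((hπg _ _).symm.trans (fixes (pt2 F) (by simp)))
    obtain ⟨c, hc⟩ := (mk_eq_mk_iff F _ _ _ _).mp ((hπg _ _).symm.trans (fixes (pt3 F) (by simp)))
    have hsum : (a : F) • (Pi.single 0 1 : Fin 2 → F) + (b : F) • Pi.single 1 1 =
        (c : F) • (Pi.single 0 1 + Pi.single 1 1) := by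
      rw [← Units.smul_def, ← Units.smul_def, ← Units.smul_def, ha, hb, hc, map_add]
    have hac : (a : F) = c := by simpa using congrFun hsum 0
    have hbc : (b : F) = c := by simpa using congrFun hsum 1
    refine ⟨τ, Equiv.ext fun x => ?_⟩
    induction x using Projectivization.ind with | h v hv =>
    rw [hπg, autPerm_mk, mk_eq_mk_iff']
    refine ⟨c, (semilinear_apply_eq_smul_comp hg ?_ ?_ v).symm⟩
    · rw [← ha, Units.smul_def, hac]
    · rw [← hb, Units.smul_def, hbc]
  · rintro ⟨τ, hτ⟩
    refine mem_listStab.mpr fun ω hω => ?_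
    change (π : Equiv.Perm (ProjLine F)) ω = ω
    simp only [List.mem_cons, List.not_mem_nil, or_false] at hω
    rcases hω with rfl | rfl | rfl <;>
    · rw [hτ]
      refine (autPerm_mk _ _ _).trans ?_
      congr 1
      ext i; fin_cases i <;> simp

lemma eq_autPerm_iff {π : Equiv.Perm (ProjLine F)} {τ : RingAut F} :
    π = autPerm τ ↔ ∀ (v : Fin 2 → F) (hv : v ≠ 0),
      π (mk F v hv) = mk F (⇑τ ∘ v) (fun h0 => hv (funext fun i =>
        (map_eq_zero_iff τ τ.injective).mp (congrFun h0 i))) :=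
  ⟨fun h v hv => h ▸ rfl, fun h => Equiv.ext fun x => by
    induction x using Projectivization.ind with | h v hv => exact h v hv⟩

noncomputable def autMulEquivListStabPt :
    RingAut F ≃* listStab (PGammaL2 F) [pt1 F, pt2 F, pt3 F] :=
  MulEquiv.ofBijective ((autPerm.codRestrict _ autPerm_mem).codRestrict _
      fun τ => (mem_listStab_pt_iff _).mpr ⟨τ, rfl⟩)
    ⟨fun _ _ h => autPerm_injective (congrArg (fun π => π.1.1) h),
      fun π => by
        obtain ⟨τ, hτ⟩ := (mem_listStab_pt_iff π.1).mp π.2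
        exact ⟨τ, Subtype.ext (Subtype.ext hτ.symm)⟩⟩

end StandardFrame

section ThreeTransitive
variable {F : Type*} [Field F]

lemma exists_mem_PGammaL2_pt_eq {x y z : ProjLine F} (hxy : x ≠ y) (hxz : x ≠ z) (hyz : y ≠ z) :
    ∃ π ∈ PGammaL2 F, π (pt1 F) = x ∧ π (pt2 F) = y ∧ π (pt3 F) = z := by
  obtain ⟨b, hb⟩ : ∃ b : Module.Basis (Fin 2) F (Fin 2 → F), ⇑b = ![x.rep, y.rep] :=
    ⟨_, coe_basisOfLinearIndependentOfCardEqFinrank (linearIndependent_pair_iff_ne.mpr hxy)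
      (by simp)⟩
  obtain ⟨c, hz⟩ : ∃ c : Fin 2 → F, z.rep = c 0 • x.rep + c 1 • y.rep :=
    ⟨b.repr z.rep, by simpa [Fin.sum_univ_two, hb] using (b.sum_repr z.rep).symm⟩
  have hc : ∀ i, c i ≠ 0 := by
    intro i hi
    fin_cases i
    · refine hyz (Eq.symm ?_)
      rw [← mk_rep y, ← mk_rep z, mk_eq_mk_iff']
      exact ⟨c 1, by simp_all⟩
    · refine hxz (Eq.symm ?_)
      rw [← mk_rep x, ← mk_rep z, mk_eq_mk_iff']
      exact ⟨c 0, by simp_all⟩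
  -- rescale the basis so that `pt3` is also sent to `z`
  let g := (Pi.basisFun F (Fin 2)).equiv (b.unitsSMul fun i => Units.mk0 _ (hc i))
    (Equiv.refl _)
  have hg : ∀ i, g (Pi.single i 1) = c i • ![x.rep, y.rep] i := fun i => by
    rw [← Pi.basisFun_apply, Module.Basis.equiv_apply, Module.Basis.unitsSMul_apply, hb]
    rfl
  let π := semilinearPerm 1 g.toAddEquiv g.map_smul
  have hπ : ∀ (w : Fin 2 → F) (hw : w ≠ 0) (p : ProjLine F) (a : F),
      g w = a • p.rep → π (mk F w hw) = p := fun w hw p a h => by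
    refine (semilinearPerm_mk _ _ _ w hw).trans ?_
    conv_rhs => rw [← mk_rep p]
    exact (mk_eq_mk_iff' _ _ _ _ _).mpr ⟨a, h.symm⟩
  refine ⟨π, semilinearPerm_mem _ _ _, hπ _ _ x (c 0) (hg 0), hπ _ _ y (c 1) (hg 1),
    hπ _ _ z 1 ?_⟩
  rw [map_add, hg 0, hg 1, hz, one_smul]
  rfl

lemma card_listStab_of_pairwise_ne {x y z : ProjLine F} (hxy : x ≠ y) (hxz : x ≠ z)
    (hyz : y ≠ z) : Nat.card (listStab (PGammaL2 F) [x, y, z]) = Nat.card (RingAut F) := by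
  obtain ⟨π, hπ, rfl, rfl, rfl⟩ := exists_mem_PGammaL2_pt_eq hxy hxz hyz
  have hmap : [π (pt1 F), π (pt2 F), π (pt3 F)] =
      [pt1 F, pt2 F, pt3 F].map ((⟨π, hπ⟩ : PGammaL2 F) • ·) := rfl
  rw [hmap, listStab_map_smul, Subgroup.card_map_of_injective (MulAut.conj _).injective,
    Nat.card_congr autMulEquivListStabPt.toEquiv]

end ThreeTransitive

lemma length_le_of_isIrredundant_PGammaL2 {F : Type*} [Field F] [Finite F] {l : List (ProjLine F)}
    (hl : IsIrredundant (PGammaL2 F) l) :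
    l.length ≤ 3 + cardFactors (Nat.card (RingAut F)) := by
  rcases l with _ | ⟨x, _ | ⟨y, _ | ⟨z, rest⟩⟩⟩
  · simp
  · simp; omega
  · simp; omega
  have hxy : y ∉ [x] := hl.getElem_notMem_take (k := 1) (by simp)
  have hz : z ∉ [x, y] := hl.getElem_notMem_take (k := 2) (by simp)
  simp only [List.mem_cons, List.not_mem_nil, or_false, not_or] at hxy hz
  simpa [card_listStab_of_pairwise_ne (Ne.symm hxy) (Ne.symm hz.1) (Ne.symm hz.2)]
    using hl.length_le 3

noncomputable def ringAutMulEquivAlgEquivZMod (n : ℕ) (L : Type*) [Ring L] [Algebra (ZMod n) L] :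
    RingAut L ≃* (L ≃ₐ[ZMod n] L) where
  toFun τ := AlgEquiv.ofRingEquiv (f := τ) fun x =>
    RingHom.congr_fun (Subsingleton.elim ((τ : L →+* L).comp (algebraMap (ZMod n) L)) _) x
  invFun σ := σ.toRingEquiv
  left_inv _ := rfl
  right_inv _ := rfl
  map_mul' _ _ := rfl

section GaloisField
variable (p f : ℕ) [Fact p.Prime]

instance : IsCyclic (RingAut (GaloisField p f)) :=
  isCyclic_of_surjective _ (ringAutMulEquivAlgEquivZMod p (GaloisField p f)).symm.surjective

lemma card_ringAut_galoisField (hf : f ≠ 0) : Nat.card (RingAut (GaloisField p f)) = f := by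
  rw [Nat.card_congr (ringAutMulEquivAlgEquivZMod p (GaloisField p f)).toEquiv,
    IsGalois.card_aut_eq_finrank, GaloisField.finrank p hf]

end GaloisField

/-- for `G = PΓL₂(F_q)`, `q = p^f`, acting on the projective line, the
pointwise stabilizer of `⟨e₁⟩, ⟨e₂⟩, ⟨e₁+e₂⟩` is the group of field automorphisms, which
is cyclic of order `f`; consequently `Irred(G,Ω) ≤ 3 + π(f)`. -/
theorem stmt_10 (p f : ℕ) [Fact p.Prime] (hf : 0 < f) :
    (∀ π : PGammaL2 (GaloisField p f),
      π ∈ listStab (PGammaL2 (GaloisField p f))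
          [pt1 (GaloisField p f), pt2 (GaloisField p f), pt3 (GaloisField p f)] ↔
        ∃ τ : GaloisField p f ≃+* GaloisField p f,
          ∀ (v : Fin 2 → GaloisField p f) (hv : v ≠ 0),
            (π : Equiv.Perm (ProjLine (GaloisField p f))) (Projectivization.mk _ v hv) =
              Projectivization.mk _ (⇑τ ∘ v)
                (fun h0 => hv (funext fun i =>
                  (map_eq_zero_iff τ τ.injective).mp (congrFun h0 i)))) ∧
    IsCyclic (listStab (PGammaL2 (GaloisField p f))
      [pt1 (GaloisField p f), pt2 (GaloisField p f), pt3 (GaloisField p f)]) ∧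
    Nat.card (listStab (PGammaL2 (GaloisField p f))
      [pt1 (GaloisField p f), pt2 (GaloisField p f), pt3 (GaloisField p f)]) = f ∧
    irredStat (PGammaL2 (GaloisField p f)) (ProjLine (GaloisField p f)) ≤
      3 + (f.primeFactorsList.length : ℕ∞) := by
  have hcard := card_ringAut_galoisField p f hf.ne'
  refine ⟨fun π => (mem_listStab_pt_iff π).trans (exists_congr fun τ => eq_autPerm_iff),
    isCyclic_of_surjective _ autMulEquivListStabPt.surjective,
    (Nat.card_congr autMulEquivListStabPt.toEquiv).symm.trans hcard, ?_⟩
  refine sSup_le ?_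
  rintro _ ⟨l, hl, rfl⟩
  have := length_le_of_isIrredundant_PGammaL2 hl
  rw [hcard, cardFactors_apply] at this
  exact_mod_cast this
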